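/- Let A be a real symmetric n×n matrix whose eigenvalue vector λ(A) belongs to Γ_k^+ for some 1 ≤ k ≤ n. Then the Newton transformation T_{k−1}(A) is a positive definite matrix. -/

import Mathlib

/-- The `k`-th elementary symmetric function of `lam = (λ_1, …, λ_n) ∈ ℝ^n`. -/
noncomputable def esymm (n k : ℕ) (lam : Fin n → ℝ) : ℝ :=
  ∑ s ∈ Finset.univ.powersetCard k, ∏ i ∈ s, lam i

/-- The Gårding cone `Γ_k^+ = {λ ∈ ℝ^n : σ_j(λ) > 0 for j = 1, …, k}`. -/
def GammaPlus (n k : ℕ) : Set (Fin n → ℝ) :=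
  {lam | ∀ j : ℕ, 1 ≤ j → j ≤ k → 0 < esymm n j lam}

/-- `σ_k(A)` for a real symmetric matrix `A`: the `k`-th elementary symmetric function
of its eigenvalues (listed with multiplicity). -/
noncomputable def sigmaMat {n : ℕ} (A : Matrix (Fin n) (Fin n) ℝ) (hA : A.IsHermitian)
    (k : ℕ) : ℝ :=
  esymm n k hA.eigenvalues

/-- The `k`-th Newton transformation
`T_k(A) = σ_k(A)·I − σ_{k−1}(A)·A + σ_{k−2}(A)·A² − ⋯ + (−1)^k A^k`. -/
noncomputable def newtonT {n : ℕ} (A : Matrix (Fin n) (Fin n) ℝ) (hA : A.IsHermitian)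
    (k : ℕ) : Matrix (Fin n) (Fin n) ℝ :=
  ∑ j ∈ Finset.range (k + 1), ((-1 : ℝ) ^ j * sigmaMat A hA (k - j)) • A ^ j

/-!
In an orthonormal eigenbasis of `A`, `T_{k-1}(A)` is diagonal with entries
`∑_j (-1)^j σ_{k-1-j}(λ) λ_i^j = σ_{k-1}(λ|i)`, the elementary symmetric function of the
eigenvalues other than `λ_i`. So it suffices that `σ_{k-1}(λ|i) > 0` on `Γ_k^+`, which is proved
by induction on `k`. The cone is stable under `λ ↦ λ + c (1, …, 1)` for `c ≥ 0`, and along this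
ray `σ_{k-1}(λ|i)` never vanishes: otherwise `σ_k(λ|i) = σ_k(λ) > 0` while `σ_{k-2}(λ|i) > 0` by
induction, against Newton's inequality. As it is positive once all entries are positive, it is
positive at `c = 0` by the intermediate value theorem.
Newton's inequality comes from Rolle's theorem: differentiating `∏ (X + μ_j)` puts
`σ_{j+2}, σ_{j+1}, σ_j` (up to positive factors) in the three lowest coefficients of a
real-rooted polynomial, and these always satisfy `2 a₀ a₂ ≤ a₁²`.
-/

open Polynomial

namespace Multiset

section CommRing

variable {R : Type*} [CommRing R]

theorem esymm_zero (s : Multiset R) : s.esymm 0 = 1 := by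
  simp [esymm]

theorem esymm_eq_zero_of_card_lt {s : Multiset R} {k : ℕ} (h : card s < k) : s.esymm k = 0 := by
  simp [esymm, powersetCard_eq_empty _ h]

theorem esymm_cons_succ (a : R) (s : Multiset R) (k : ℕ) :
    (a ::ₘ s).esymm (k + 1) = s.esymm (k + 1) + a * s.esymm k := by
  simp [esymm, powersetCard_cons, sum_map_mul_left, map_map]

theorem sum_range_neg_one_pow_mul_esymm_cons (a : R) (s : Multiset R) (m : ℕ) :
    ∑ j ∈ Finset.range (m + 1), (-1) ^ j * (a ::ₘ s).esymm (m - j) * a ^ j = s.esymm m := by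
  induction m with
  | zero => simp [esymm_zero]
  | succ m ih =>
    have hterm : ∀ j ∈ Finset.range (m + 1),
        (-1) ^ (j + 1) * (a ::ₘ s).esymm (m + 1 - (j + 1)) * a ^ (j + 1)
          = -a * ((-1) ^ j * (a ::ₘ s).esymm (m - j) * a ^ j) := fun j _ => by
      rw [Nat.add_sub_add_right]; ring
    rw [Finset.sum_range_succ', Finset.sum_congr rfl hterm, ← Finset.mul_sum, ih, Nat.sub_zero,
      esymm_cons_succ]
    ring

theorem esymm_map_add_const (s : Multiset R) (c : R) {j : ℕ} (hj : j ≤ card s) :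
    (s.map (· + c)).esymm j = ∑ m ∈ Finset.range (j + 1),
      ((m + (card s - j)).choose (card s - j) : R) * s.esymm (j - m) * c ^ m := by
  set N := card s
  set P := (s.map fun a => X + C a).prod
  have hcoeff : ∀ t : Multiset R, card t = N → ∀ r ≤ N,
      (t.map fun a => X + C a).prod.coeff (N - r) = t.esymm r := by
    intro t ht r hr
    rw [prod_X_add_C_coeff t (by omega), ht, Nat.sub_sub_self hr]
  have htaylor : taylor c P = ((s.map (· + c)).map fun a => X + C a).prod := by
    simp only [P, taylor_apply, multiset_prod_comp, map_map, Function.comp_def, add_comp, X_comp,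
      C_comp, C_add, add_assoc, add_comm (C c)]
  have hdeg : (hasseDeriv (N - j) P).natDegree < j + 1 := by
    have hP : P.natDegree ≤ N := (natDegree_multiset_prod_le _).trans
      (by simpa [N] using Nat.mul_le_mul_left N natDegree_X_le)
    have := natDegree_hasseDeriv_le P (N - j)
    omega
  rw [← hcoeff _ (by simp [N]) j hj, ← htaylor, taylor_coeff, eval_eq_sum_range' hdeg]
  refine Finset.sum_congr rfl fun m hm => ?_
  rw [Finset.mem_range] at hm
  rw [hasseDeriv_coeff, show m + (N - j) = N - (j - m) by omega, hcoeff s rfl _ (by omega)]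

end CommRing

theorem esymm_pos_of_forall_pos {R : Type*} [CommRing R] [LinearOrder R] [IsStrictOrderedRing R]
    {s : Multiset R} (hs : ∀ a ∈ s, 0 < a) {k : ℕ} (hk : k ≤ card s) : 0 < s.esymm k := by
  have hne : s.powersetCard k ≠ 0 := by
    rw [← card_pos, card_powersetCard]
    exact Nat.choose_pos hk
  simpa [esymm] using sum_lt_sum_of_nonempty hne (f := fun _ => 0) (g := prod)
    fun t ht => prod_pos fun a ha => hs a (mem_of_le (mem_powersetCard.1 ht).1 ha)

end Multiset

namespace Polynomial

section Ordered

variable {R : Type*} [CommRing R] [LinearOrder R] [IsStrictOrderedRing R]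

theorem two_mul_coeff_zero_mul_coeff_two_le_prod_X_sub_C (s : Multiset R) :
    2 * (s.map fun a => X - C a).prod.coeff 0 * (s.map fun a => X - C a).prod.coeff 2
      ≤ (s.map fun a => X - C a).prod.coeff 1 ^ 2 := by
  induction s using Multiset.induction with
  | empty => simp [coeff_one]
  | cons a s ih =>
    rw [Multiset.map_cons, Multiset.prod_cons, coeff_X_sub_C_mul, coeff_X_sub_C_mul,
      mul_coeff_zero]
    set q := (s.map fun a => X - C a).prod
    simp only [coeff_sub, coeff_X_zero, coeff_C_zero, zero_sub, zero_add]
    nlinarith [mul_le_mul_of_nonneg_left ih (sq_nonneg a), sq_nonneg (q.coeff 0)]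

theorem two_mul_coeff_zero_mul_coeff_two_le {p : R[X]} (hp : p.roots.card = p.natDegree) :
    2 * p.coeff 0 * p.coeff 2 ≤ p.coeff 1 ^ 2 := by
  rw [← C_leadingCoeff_mul_prod_multiset_X_sub_C hp]
  simp only [coeff_C_mul]
  nlinarith [mul_le_mul_of_nonneg_left (two_mul_coeff_zero_mul_coeff_two_le_prod_X_sub_C p.roots)
    (sq_nonneg p.leadingCoeff)]

end Ordered

theorem card_roots_iterate_derivative {p : ℝ[X]} (hp : p.roots.card = p.natDegree) (d : ℕ) :
    (derivative^[d] p).roots.card = (derivative^[d] p).natDegree := by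
  induction d with
  | zero => exact hp
  | succ d ih =>
    rw [Function.iterate_succ_apply']
    have hle := card_roots_le_derivative (derivative^[d] p)
    have hge := card_roots' (derivative^[d] p).derivative
    rw [natDegree_derivative] at hge ⊢
    omega

end Polynomial

namespace Multiset

theorem esymm_add_two_nonpos_of_esymm_add_one_eq_zero {s : Multiset ℝ} {j : ℕ}
    (hj : 0 < s.esymm j) (hj1 : s.esymm (j + 1) = 0) : s.esymm (j + 2) ≤ 0 := by
  rcases lt_or_ge (card s) (j + 2) with hlt | hle
  · exact (esymm_eq_zero_of_card_lt hlt).le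
  set d := card s - (j + 2)
  set P := (s.map fun a => X + C a).prod
  have hP : P.roots.card = P.natDegree := by
    have : P = ((s.map Neg.neg).map fun a => X - C a).prod := by
      simp [P, map_map, sub_eq_add_neg]
    rw [this, roots_multiset_prod_X_sub_C, natDegree_multiset_prod_X_sub_C_eq_card]
  have hcoeff : ∀ t ≤ 2, (derivative^[d] P).coeff t
      = ((t + d).descFactorial d : ℝ) * s.esymm (j + 2 - t) := by
    intro t ht
    rw [coeff_iterate_derivative, nsmul_eq_mul, prod_X_add_C_coeff s (by omega)]
    congr 2
    omega
  have hfac : ∀ t, (0 : ℝ) < (t + d).descFactorial d := fun t => by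
    exact_mod_cast Nat.descFactorial_pos.2 (Nat.le_add_left d t)
  have hrolle := two_mul_coeff_zero_mul_coeff_two_le (card_roots_iterate_derivative hP d)
  rw [hcoeff 0 (by omega), hcoeff 1 (by omega), hcoeff 2 (by omega), Nat.sub_zero,
    show j + 2 - 1 = j + 1 by omega, Nat.add_sub_cancel, hj1] at hrolle
  by_contra! h
  nlinarith [mul_pos (mul_pos (hfac 0) h) (mul_pos (hfac 2) hj)]

end Multiset

/-- `Γ_k^+` on multisets of entries, where deleting an entry is peeling off a `cons`. -/
def gardingCone (k : ℕ) : Set (Multiset ℝ) :=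
  {s | ∀ j, 1 ≤ j → j ≤ k → 0 < s.esymm j}

section gardingCone

open Multiset

variable {s : Multiset ℝ} {k : ℕ}

theorem gardingCone_anti {k l : ℕ} (h : k ≤ l) : gardingCone l ⊆ gardingCone k :=
  fun _ hs j hj1 hj => hs j hj1 (hj.trans h)

theorem esymm_pos_of_mem_gardingCone (hs : s ∈ gardingCone k) {j : ℕ} (hj : j ≤ k) :
    0 < s.esymm j := by
  rcases Nat.eq_zero_or_pos j with rfl | hj1
  · simp [esymm_zero]
  · exact hs j hj1 hj

theorem le_card_of_mem_gardingCone (hs : s ∈ gardingCone k) : k ≤ card s := by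
  by_contra! h
  exact (esymm_pos_of_mem_gardingCone hs le_rfl).ne' (esymm_eq_zero_of_card_lt h)

theorem map_add_const_mem_gardingCone (hs : s ∈ gardingCone k) {c : ℝ} (hc : 0 ≤ c) :
    s.map (· + c) ∈ gardingCone k := by
  intro j hj1 hjk
  rw [esymm_map_add_const s c (hjk.trans (le_card_of_mem_gardingCone hs))]
  refine Finset.sum_pos' (fun m _ => ?_) ⟨0, by simp, by simpa using hs j hj1 hjk⟩
  have := esymm_pos_of_mem_gardingCone hs (j.sub_le m |>.trans hjk)
  positivity

theorem esymm_succ_ne_zero_of_cons_mem_gardingCone {a : ℝ} (has : a ::ₘ s ∈ gardingCone (k + 2))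
    (hs : 0 < s.esymm k) : s.esymm (k + 1) ≠ 0 := by
  intro h0
  have hpos := esymm_pos_of_mem_gardingCone has le_rfl
  rw [esymm_cons_succ, h0, mul_zero, add_zero] at hpos
  exact (esymm_add_two_nonpos_of_esymm_add_one_eq_zero hs h0).not_gt hpos

theorem esymm_pred_pos_of_cons_mem_gardingCone {a : ℝ} (has : a ::ₘ s ∈ gardingCone k) :
    0 < s.esymm (k - 1) := by
  induction k generalizing a s with
  | zero => simp [esymm_zero]
  | succ k ih =>
    rcases k with _ | k
    · simp [esymm_zero]
    set f : ℝ → ℝ := fun c => (s.map (· + c)).esymm (k + 1)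
    have hcard : k + 1 ≤ card s := by simpa using le_card_of_mem_gardingCone has
    have hne : ∀ c, 0 ≤ c → f c ≠ 0 := fun c hc => by
      have hmem : (a + c) ::ₘ s.map (· + c) ∈ gardingCone (k + 2) := by
        simpa using map_add_const_mem_gardingCone has hc
      exact esymm_succ_ne_zero_of_cons_mem_gardingCone hmem (ih (gardingCone_anti (by omega) hmem))
    have hcont : Continuous f := by
      simp only [f, esymm_map_add_const s _ hcard]
      fun_prop
    obtain ⟨C, hC, hCpos⟩ : ∃ C : ℝ, 0 ≤ C ∧ ∀ x ∈ s, 0 < x + C :=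
      ((Filter.eventually_ge_atTop 0).and ((Filter.eventually_all_finset s.toFinset).2
        fun x _ => Filter.eventually_gt_atTop (-x))).exists.imp fun C hC =>
          ⟨hC.1, fun x hx => by linarith [hC.2 x (mem_toFinset.2 hx)]⟩
    have hfC : 0 < f C := esymm_pos_of_forall_pos (by simpa using hCpos) (by simpa using hcard)
    by_contra! hf0
    obtain ⟨c, hc, hfc⟩ := intermediate_value_Icc hC hcont.continuousOn
      ⟨by simpa [f] using hf0, hfC.le⟩
    exact hne c hc.1 hfc

end gardingCone

namespace Matrix.IsHermitian

open Unitary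

variable {n : Type*} [Fintype n] [DecidableEq n] {A : Matrix n n ℝ}

theorem sum_smul_pow_eq (hA : A.IsHermitian) (S : Finset ℕ) (c : ℕ → ℝ) :
    ∑ j ∈ S, c j • A ^ j = conjStarAlgAut ℝ _ hA.eigenvectorUnitary
      (diagonal fun i => ∑ j ∈ S, c j * hA.eigenvalues i ^ j) := by
  conv_lhs => rw [hA.spectral_theorem]
  simp only [← map_pow, ← map_smul, ← map_sum]
  congr 1
  ext i i'
  by_cases h : i = i' <;> simp [diagonal_pow, sum_apply, h]

theorem posDef_sum_smul_pow_iff (hA : A.IsHermitian) (S : Finset ℕ) (c : ℕ → ℝ) :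
    (∑ j ∈ S, c j • A ^ j).PosDef ↔ ∀ i, 0 < ∑ j ∈ S, c j * hA.eigenvalues i ^ j := by
  rw [hA.sum_smul_pow_eq, conjStarAlgAut_apply,
    IsUnit.posDef_star_right_conjugate_iff Unitary.isUnit_coe, posDef_diagonal_iff]

end Matrix.IsHermitian

theorem esymm_eq_esymm_map_univ (n k : ℕ) (lam : Fin n → ℝ) :
    esymm n k lam = (Finset.univ.val.map lam).esymm k :=
  (Finset.esymm_map_val lam _ k).symm

theorem newtonT_posDef_general (n k : ℕ)
    (A : Matrix (Fin n) (Fin n) ℝ) (hA : A.IsHermitian)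
    (h : hA.eigenvalues ∈ GammaPlus n k) :
    (newtonT A hA (k - 1)).PosDef := by
  rw [newtonT, hA.posDef_sum_smul_pow_iff]
  intro i
  have hsplit : Finset.univ.val.map hA.eigenvalues
      = hA.eigenvalues i ::ₘ (Finset.univ.erase i).val.map hA.eigenvalues := by
    rw [Finset.erase_val, ← Multiset.map_cons, Multiset.cons_erase (Finset.mem_univ_val i)]
  have hmem : hA.eigenvalues i ::ₘ (Finset.univ.erase i).val.map hA.eigenvalues
      ∈ gardingCone k := fun j hj1 hjk => by
    simpa [esymm_eq_esymm_map_univ, hsplit] using h j hj1 hjk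
  simp only [sigmaMat, esymm_eq_esymm_map_univ, hsplit,
    Multiset.sum_range_neg_one_pow_mul_esymm_cons]
  exact esymm_pred_pos_of_cons_mem_gardingCone hmem

/-- If the eigenvalue vector of a real symmetric matrix `A` lies in `Γ_k^+`, then the
Newton transformation `T_{k−1}(A)` is positive definite. -/
theorem newtonT_posDef (n k : ℕ) (hk1 : 1 ≤ k) (hk2 : k ≤ n)
    (A : Matrix (Fin n) (Fin n) ℝ) (hA : A.IsHermitian)
    (h : hA.eigenvalues ∈ GammaPlus n k) :
    (newtonT A hA (k - 1)).PosDef :=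
  newtonT_posDef_general n k A hA h
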